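/- arXiv:1711.08857 — 4 statements merged into one kernel-verified Lean document; each statement's English description precedes it below -/
import Mathlib

section
/- For every integer n ≥ 1, the set of parameters p at which stopping is optimal in state (n,1) is a left interval with right endpoint p_n: for every p ∈ (0,1), U_n(p) ≥ W_n(p) if and only if p ≤ p_n. -/
/-!
Write `R(n, k) = P(M_n ≤ k)`. It obeys the same one-step recursion as `π_p` (with `R(n + 1, 0) =
q R(n, 1)`), and `U_n = R(n, 1)`. Dividing `π_p(n, j)` by `R(n, j)` (a Doob `h`-transform) turns
each backward-induction step into a weighted mean of two neighbouring ratios, with weights the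
conditional odds `p R(n, k) : q R(n, k + 2)` of an up-step. These odds satisfy a closed recursion
from which they increase with `p`, and then so do the ratios `R(n, k + 1) / R(n, k)`. By induction
on `n` the ratios `π_p(n, j) / R(n, j)` decrease in steps of two in `j` and increase with `p`.
Hence `W_n / U_n` is nondecreasing in `p`, the stopping set `{U_n ≥ W_n}` is an initial segment
of `(0, 1)`, and by continuity it contains its supremum `p_n`.
-/

open Finset

/-- Probability weight of a single path of length `N`. -/
noncomputable def pathProb (p : ℝ) (N : ℕ) (x : Fin N → Bool) : ℝ :=
  p ^ (Finset.univ.filter (fun i => x i = true)).card *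
    (1 - p) ^ (N - (Finset.univ.filter (fun i => x i = true)).card)

open Classical in
/-- Probability of an event `E` for the `N`-step Bernoulli walk. -/
noncomputable def walkProb (p : ℝ) (N : ℕ) (E : Set (Fin N → Bool)) : ℝ :=
  ∑ x : Fin N → Bool, if x ∈ E then pathProb p N x else 0

/-- Partial sum `S_j` of the walk given by the path `x`. -/
def walkS (N : ℕ) (x : Fin N → Bool) (j : ℕ) : ℤ :=
  ∑ i ∈ Finset.univ.filter (fun i : Fin N => (i : ℕ) < j), (if x i then (1 : ℤ) else -1)

/-- Running maximum `M_N = max_{0 ≤ j ≤ N} S_j`. -/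
def walkM (N : ℕ) (x : Fin N → Bool) : ℤ :=
  (Finset.range (N + 1)).sup' Finset.nonempty_range_add_one (fun j => walkS N x j)

/-- `U_n(p) = P(M_n ≤ 1)`. -/
noncomputable def U (n : ℕ) (p : ℝ) : ℝ :=
  walkProb p n {x | walkM n x ≤ 1}

/-- Value function `π_p(n, j)`, defined by backward induction. -/
noncomputable def piVal (p : ℝ) : ℕ → ℕ → ℝ
  | 0, 0 => 1
  | 0, 1 => 1
  | 0, _ + 2 => 0
  | n + 1, 0 => p * piVal p n 0 + (1 - p) * piVal p n 1
  | n + 1, 1 => max (U (n + 1) p) (p * piVal p n 0 + (1 - p) * piVal p n 2)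
  | n + 1, j + 2 => p * piVal p n (j + 1) + (1 - p) * piVal p n (j + 3)

/-- `W_n(p) = p·π_p(n-1,0) + q·π_p(n-1,2)` (for `n ≥ 1`). -/
noncomputable def W (n : ℕ) (p : ℝ) : ℝ :=
  p * piVal p (n - 1) 0 + (1 - p) * piVal p (n - 1) 2

/-- Critical value `p_n = sup {p ∈ (0,1) : U_n(p) ≥ W_n(p)}`. -/
noncomputable def pc (n : ℕ) : ℝ :=
  sSup {p : ℝ | p ∈ Set.Ioo (0 : ℝ) 1 ∧ U n p ≥ W n p}

noncomputable def weightedMean (a x y : ℝ) : ℝ := (a * x + y) / (a + 1)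

lemma weightedMean_div {u v : ℝ} (hv : v ≠ 0) (x y : ℝ) :
    weightedMean (u / v) x y = (u * x + v * y) / (u + v) := by
  rw [weightedMean, div_add_one hv, ← div_div_div_cancel_right₀ hv (u * x + v * y)]
  congr 1
  field_simp

lemma weightedMean_le_left {a x y : ℝ} (ha : 0 ≤ a) (h : y ≤ x) :
    weightedMean a x y ≤ x := by
  rw [weightedMean, div_le_iff₀ (by linarith)]
  linarith

lemma right_le_weightedMean {a x y : ℝ} (ha : 0 ≤ a) (h : y ≤ x) :
    y ≤ weightedMean a x y := by
  rw [weightedMean, le_div_iff₀ (by linarith)]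
  nlinarith

lemma weightedMean_le_weightedMean {a a' x x' y y' : ℝ} (ha : 0 ≤ a) (haa' : a ≤ a')
    (hyx : y ≤ x) (hx : x ≤ x') (hy : y ≤ y') :
    weightedMean a x y ≤ weightedMean a' x' y' := by
  calc weightedMean a x y ≤ weightedMean a' x y := by
        unfold weightedMean
        rw [div_le_div_iff₀ (by linarith) (by linarith)]
        nlinarith [mul_nonneg (sub_nonneg.2 haa') (sub_nonneg.2 hyx)]
    _ ≤ weightedMean a' x' y' := by
        have ha' : 0 ≤ a' := ha.trans haa'
        unfold weightedMean
        gcongr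

lemma MonotoneOn.weightedMean {s : Set ℝ} {a x y : ℝ → ℝ} (ha : MonotoneOn a s)
    (ha₀ : ∀ p ∈ s, 0 ≤ a p) (hx : MonotoneOn x s) (hy : MonotoneOn y s)
    (hyx : ∀ p ∈ s, y p ≤ x p) :
    MonotoneOn (fun p => _root_.weightedMean (a p) (x p) (y p)) s :=
  fun _ hp _ hq hpq => weightedMean_le_weightedMean (ha₀ _ hp) (ha hp hq hpq) (hyx _ hp)
    (hx hp hq hpq) (hy hp hq hpq)

lemma monotoneOn_div_add_one {s : Set ℝ} {a : ℝ → ℝ} (ha : MonotoneOn a s)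
    (ha₀ : ∀ p ∈ s, 0 ≤ a p) : MonotoneOn (fun p => a p / (a p + 1)) s := by
  intro p hp q hq hpq
  have := ha₀ p hp
  have := ha hp hq hpq
  rw [div_le_div_iff₀ (by linarith) (by linarith)]
  nlinarith

lemma ge_iff_le_sSup_of_downward_closed {f g : ℝ → ℝ} {b : ℝ} (hf : Continuous f)
    (hg : Continuous g)
    (hdown : ∀ x ∈ Set.Ioo 0 b, ∀ y ∈ Set.Ioo 0 b, x ≤ y → f y ≤ g y → f x ≤ g x)
    {p : ℝ} (hp : p ∈ Set.Ioo 0 b) :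
    g p ≥ f p ↔ p ≤ sSup {x | x ∈ Set.Ioo 0 b ∧ g x ≥ f x} := by
  set S := {x | x ∈ Set.Ioo 0 b ∧ g x ≥ f x}
  have hbdd : BddAbove S := ⟨b, fun x hx => hx.1.2.le⟩
  refine ⟨fun h => le_csSup hbdd ⟨hp, h⟩, fun h => ?_⟩
  have hne : S.Nonempty := by
    by_contra hS
    rw [Set.not_nonempty_iff_eq_empty.1 hS, Real.sSup_empty] at h
    exact h.not_gt hp.1
  rcases h.lt_or_eq with hlt | rfl
  · obtain ⟨y, hyS, hpy⟩ := exists_lt_of_lt_csSup hne hlt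
    exact hdown p hp y hyS.1 hpy.le hyS.2
  · exact (isClosed_le hf hg).closure_subset
      (closure_mono (fun x hx => hx.2) (csSup_mem_closure hne hbdd))

lemma walkS_zero (N : ℕ) (x : Fin N → Bool) : walkS N x 0 = 0 := by
  simp [walkS]

lemma walkS_cons_succ (n : ℕ) (b : Bool) (y : Fin n → Bool) (j : ℕ) :
    walkS (n + 1) (Fin.cons b y) (j + 1) = (if b then 1 else -1) + walkS n y j := by
  simp only [walkS, Finset.sum_filter, Fin.sum_univ_succ, Fin.cons_zero, Fin.cons_succ,
    Fin.val_zero, Fin.val_succ, Nat.zero_lt_succ, if_true, Nat.succ_lt_succ_iff]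

lemma walkM_le_iff (N : ℕ) (x : Fin N → Bool) (k : ℤ) :
    walkM N x ≤ k ↔ ∀ j < N + 1, walkS N x j ≤ k := by
  simp [walkM]

lemma walkM_nonneg (N : ℕ) (x : Fin N → Bool) : 0 ≤ walkM N x :=
  (walkS_zero N x).symm.le.trans (Finset.le_sup' (fun j => walkS N x j) (by simp))

lemma walkM_cons_le_iff (n : ℕ) (b : Bool) (y : Fin n → Bool) (k : ℤ) :
    walkM (n + 1) (Fin.cons b y) ≤ k ↔ 0 ≤ k ∧ walkM n y + (if b then 1 else -1) ≤ k := by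
  rw [← le_sub_iff_add_le, walkM_le_iff, walkM_le_iff, Nat.forall_lt_succ_left, walkS_zero]
  simp only [walkS_cons_succ, ← le_sub_iff_add_le']

lemma pathProb_cons (p : ℝ) (n : ℕ) (b : Bool) (y : Fin n → Bool) :
    pathProb p (n + 1) (Fin.cons b y) = (if b then p else 1 - p) * pathProb p n y := by
  have hcard : (Finset.univ.filter fun i => (Fin.cons b y : Fin (n + 1) → Bool) i = true).card
      = (if b then 1 else 0) + (Finset.univ.filter fun i => y i = true).card := by
    simp only [Finset.card_filter, Fin.sum_univ_succ, Fin.cons_zero, Fin.cons_succ]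
  have hle : (Finset.univ.filter fun i => y i = true).card ≤ n :=
    (Finset.card_filter_le _ _).trans (Finset.card_fin n).le
  rw [pathProb, pathProb, hcard]
  cases b
  · simp [Nat.succ_sub hle, pow_succ]; ring
  · simp [add_comm 1, pow_succ]; ring

open Classical in
lemma walkProb_succ (p : ℝ) (n : ℕ) (E : Set (Fin (n + 1) → Bool)) :
    walkProb p (n + 1) E = p * walkProb p n {y | Fin.cons true y ∈ E}
      + (1 - p) * walkProb p n {y | Fin.cons false y ∈ E} := by
  simp only [walkProb, ← (Fin.consEquiv fun _ => Bool).sum_comp, Fintype.sum_prod_type,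
    Fintype.sum_bool, Finset.mul_sum, mul_ite, mul_zero]
  simp [Fin.consEquiv, pathProb_cons]

noncomputable def probMaxLe : ℕ → ℕ → ℝ → ℝ
  | 0, _, _ => 1
  | n + 1, 0, p => (1 - p) * probMaxLe n 1 p
  | n + 1, k + 1, p => p * probMaxLe n k p + (1 - p) * probMaxLe n (k + 2) p

lemma walkProb_walkM_le (p : ℝ) (n k : ℕ) :
    walkProb p n {x | walkM n x ≤ k} = probMaxLe n k p := by
  induction n generalizing k with
  | zero => simp [walkProb, pathProb, probMaxLe, walkM, walkS]
  | succ n ih =>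
    have hdown : ∀ y : Fin n → Bool, walkM n y + -1 ≤ k ↔ walkM n y ≤ (k + 1 : ℕ) := by
      intro y; push_cast; omega
    rw [walkProb_succ]
    simp only [Set.mem_ofPred_eq, walkM_cons_le_iff, if_true, Bool.false_eq_true, if_false,
      Nat.cast_nonneg, true_and, hdown, ih]
    cases k with
    | zero => simp [probMaxLe, walkProb, (walkM_nonneg n _).not_gt]
    | succ k =>
      have hup : ∀ y : Fin n → Bool, walkM n y + 1 ≤ (k + 1 : ℕ) ↔ walkM n y ≤ k := by
        intro y; push_cast; omega
      simp only [hup, ih, probMaxLe]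

lemma U_eq_probMaxLe (n : ℕ) (p : ℝ) : U n p = probMaxLe n 1 p :=
  walkProb_walkM_le p n 1

lemma probMaxLe_nonneg {p : ℝ} (hp : p ∈ Set.Icc 0 1) (n k : ℕ) : 0 ≤ probMaxLe n k p := by
  have hq : 0 ≤ 1 - p := sub_nonneg.2 hp.2
  induction n generalizing k with
  | zero => exact zero_le_one
  | succ n ih =>
    cases k with
    | zero => exact mul_nonneg hq (ih 1)
    | succ k => exact add_nonneg (mul_nonneg hp.1 (ih k)) (mul_nonneg hq (ih (k + 2)))

lemma probMaxLe_pos {p : ℝ} (hp : p ∈ Set.Ico 0 1) (n k : ℕ) : 0 < probMaxLe n k p := by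
  have hq : 0 < 1 - p := sub_pos.2 hp.2
  induction n generalizing k with
  | zero => exact zero_lt_one
  | succ n ih =>
    cases k with
    | zero => exact mul_pos hq (ih 1)
    | succ k =>
      exact add_pos_of_nonneg_of_pos (mul_nonneg hp.1 (ih k).le) (mul_pos hq (ih (k + 2)))

lemma piVal_nonneg {p : ℝ} (hp : p ∈ Set.Icc 0 1) (n j : ℕ) : 0 ≤ piVal p n j := by
  have hq : 0 ≤ 1 - p := sub_nonneg.2 hp.2
  induction n generalizing j with
  | zero => rcases j with _ | _ | j <;> simp [piVal]
  | succ n ih =>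
    rcases j with _ | _ | j
    · exact add_nonneg (mul_nonneg hp.1 (ih 0)) (mul_nonneg hq (ih 1))
    · exact le_max_of_le_left ((U_eq_probMaxLe _ _).symm ▸ probMaxLe_nonneg hp _ _)
    · exact add_nonneg (mul_nonneg hp.1 (ih _)) (mul_nonneg hq (ih _))

/-- Odds `p·P(M_n ≤ k) : q·P(M_n ≤ k + 2)` of an up-step for the walk of length `n + 1`
conditioned on `M_{n+1} ≤ k + 1`. -/
noncomputable def upOdds (n k : ℕ) (p : ℝ) : ℝ :=
  p * probMaxLe n k p / ((1 - p) * probMaxLe n (k + 2) p)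

noncomputable def maxLeRatio (n k : ℕ) (p : ℝ) : ℝ := probMaxLe n (k + 1) p / probMaxLe n k p

noncomputable def valueRatio (n j : ℕ) (p : ℝ) : ℝ := piVal p n j / probMaxLe n j p

section Recursions

variable {p : ℝ} (hp : p ∈ Set.Ico 0 1) (n : ℕ)
include hp

lemma upOdds_nonneg (k : ℕ) : 0 ≤ upOdds n k p := by
  have := probMaxLe_pos hp n k
  have := probMaxLe_pos hp n (k + 2)
  have : 0 < 1 - p := sub_pos.2 hp.2
  have := hp.1
  unfold upOdds; positivity

lemma maxLeRatio_nonneg (k : ℕ) : 0 ≤ maxLeRatio n k p :=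
  div_nonneg (probMaxLe_pos hp n _).le (probMaxLe_pos hp n _).le

lemma valueRatio_nonneg (j : ℕ) : 0 ≤ valueRatio n j p :=
  div_nonneg (piVal_nonneg (Set.Ico_subset_Icc_self hp) n j) (probMaxLe_pos hp n _).le

lemma upOdds_succ_zero : upOdds (n + 1) 0 p = upOdds n 1 p / (upOdds n 1 p + 1) := by
  have := probMaxLe_pos hp n 1
  have := probMaxLe_pos hp n 3
  have : 0 < 1 - p := sub_pos.2 hp.2
  simp only [upOdds, probMaxLe]
  field_simp

lemma upOdds_succ_succ (k : ℕ) :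
    upOdds (n + 1) (k + 1) p
      = (upOdds n k p + 1) * (upOdds n (k + 2) p / (upOdds n (k + 2) p + 1)) := by
  have := probMaxLe_pos hp n (k + 2)
  have := probMaxLe_pos hp n (k + 4)
  have : 0 < 1 - p := sub_pos.2 hp.2
  have := hp.1
  simp only [upOdds, probMaxLe]
  field_simp

lemma maxLeRatio_succ_zero : maxLeRatio (n + 1) 0 p = (upOdds n 0 p + 1) * maxLeRatio n 1 p := by
  have := probMaxLe_pos hp n 1
  have := probMaxLe_pos hp n 2
  have : 0 < 1 - p := sub_pos.2 hp.2
  simp only [maxLeRatio, upOdds, probMaxLe]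
  field_simp

lemma maxLeRatio_succ_succ (k : ℕ) :
    maxLeRatio (n + 1) (k + 1) p
      = weightedMean (upOdds n k p) (maxLeRatio n k p) (maxLeRatio n (k + 2) p) := by
  have := probMaxLe_pos hp n k
  have := probMaxLe_pos hp n (k + 2)
  have : 0 < 1 - p := sub_pos.2 hp.2
  rw [upOdds, weightedMean_div (by positivity), maxLeRatio, maxLeRatio, maxLeRatio]
  simp only [probMaxLe]
  field_simp

lemma valueRatio_succ_zero :
    valueRatio (n + 1) 0 p
      = upOdds n 0 p * maxLeRatio n 1 p * valueRatio n 0 p + valueRatio n 1 p := by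
  have := probMaxLe_pos hp n 0
  have := probMaxLe_pos hp n 1
  have := probMaxLe_pos hp n 2
  have : 0 < 1 - p := sub_pos.2 hp.2
  simp only [valueRatio, maxLeRatio, upOdds, probMaxLe, piVal]
  field_simp

lemma W_succ_div_U :
    W (n + 1) p / U (n + 1) p
      = weightedMean (upOdds n 0 p) (valueRatio n 0 p) (valueRatio n 2 p) := by
  have := probMaxLe_pos hp n 0
  have := probMaxLe_pos hp n 2
  have : 0 < 1 - p := sub_pos.2 hp.2
  rw [upOdds, weightedMean_div (by positivity), valueRatio, valueRatio, W, U_eq_probMaxLe]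
  simp only [probMaxLe, Nat.add_sub_cancel]
  field_simp

lemma valueRatio_succ_one :
    valueRatio (n + 1) 1 p
      = max 1 (weightedMean (upOdds n 0 p) (valueRatio n 0 p) (valueRatio n 2 p)) := by
  have hU : 0 < U (n + 1) p := (U_eq_probMaxLe _ _).symm ▸ probMaxLe_pos hp (n + 1) 1
  rw [← W_succ_div_U hp, valueRatio, piVal, ← U_eq_probMaxLe, ← max_div_div_right hU.le,
    div_self hU.ne', W, Nat.add_sub_cancel]

lemma valueRatio_succ_succ (j : ℕ) :
    valueRatio (n + 1) (j + 2) p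
      = weightedMean (upOdds n (j + 1) p) (valueRatio n (j + 1) p) (valueRatio n (j + 3) p) := by
  have := probMaxLe_pos hp n (j + 1)
  have := probMaxLe_pos hp n (j + 3)
  have : 0 < 1 - p := sub_pos.2 hp.2
  rw [upOdds, weightedMean_div (by positivity), valueRatio, valueRatio, valueRatio]
  simp only [probMaxLe, piVal]
  field_simp

end Recursions

theorem upOdds_monotoneOn (n k : ℕ) : MonotoneOn (upOdds n k) (Set.Ico 0 1) := by
  induction n generalizing k with
  | zero =>
    intro p hp q hq hpq
    simp only [upOdds, probMaxLe, mul_one]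
    have : 0 < 1 - q := sub_pos.2 hq.2
    have : 0 ≤ q := hq.1
    gcongr
  | succ n ih =>
    cases k with
    | zero =>
      exact (monotoneOn_div_add_one (ih 1) fun p hp => upOdds_nonneg hp n 1).congr
        fun p hp => (upOdds_succ_zero hp n).symm
    | succ k =>
      refine (((ih k).add_const 1).mul (monotoneOn_div_add_one (ih (k + 2))
        fun p hp => upOdds_nonneg hp n _) (fun p hp => ?_) (fun p hp => ?_)).congr
        fun p hp => (upOdds_succ_succ hp n k).symm
      · have := upOdds_nonneg hp n k
        positivity
      · have := upOdds_nonneg hp n (k + 2)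
        positivity

theorem maxLeRatio_le {p : ℝ} (hp : p ∈ Set.Ico 0 1) (n k : ℕ) :
    maxLeRatio n (k + 2) p ≤ maxLeRatio n k p := by
  induction n generalizing k with
  | zero => simp [maxLeRatio, probMaxLe]
  | succ n ih =>
    cases k with
    | zero =>
      calc maxLeRatio (n + 1) 2 p ≤ maxLeRatio n 1 p := by
            rw [maxLeRatio_succ_succ hp]
            exact weightedMean_le_left (upOdds_nonneg hp n 1) (ih 1)
        _ ≤ maxLeRatio (n + 1) 0 p := by
            rw [maxLeRatio_succ_zero hp]
            nlinarith [upOdds_nonneg hp n 0, maxLeRatio_nonneg hp n 1]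
    | succ k =>
      calc maxLeRatio (n + 1) (k + 3) p ≤ maxLeRatio n (k + 2) p := by
            rw [maxLeRatio_succ_succ hp]
            exact weightedMean_le_left (upOdds_nonneg hp n _) (ih _)
        _ ≤ maxLeRatio (n + 1) (k + 1) p := by
            rw [maxLeRatio_succ_succ hp]
            exact right_le_weightedMean (upOdds_nonneg hp n _) (ih _)

theorem maxLeRatio_monotoneOn (n k : ℕ) : MonotoneOn (maxLeRatio n k) (Set.Ico 0 1) := by
  induction n generalizing k with
  | zero => intro p _ q _ _; simp [maxLeRatio, probMaxLe]
  | succ n ih =>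
    cases k with
    | zero =>
      refine (((upOdds_monotoneOn n 0).add_const 1).mul (ih 1) (fun p hp => ?_)
        (fun p hp => maxLeRatio_nonneg hp n 1)).congr fun p hp => (maxLeRatio_succ_zero hp n).symm
      have := upOdds_nonneg hp n 0
      positivity
    | succ k =>
      exact ((upOdds_monotoneOn n k).weightedMean (fun p hp => upOdds_nonneg hp n k) (ih k)
        (ih (k + 2)) fun p hp => maxLeRatio_le hp n k).congr
        fun p hp => (maxLeRatio_succ_succ hp n k).symm

theorem valueRatio_le {p : ℝ} (hp : p ∈ Set.Ico 0 1) (n j : ℕ) :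
    valueRatio n (j + 2) p ≤ valueRatio n j p := by
  induction n generalizing j with
  | zero => rcases j with _ | _ | j <;> simp [valueRatio, probMaxLe, piVal]
  | succ n ih =>
    rcases j with _ | _ | j
    · calc valueRatio (n + 1) 2 p ≤ valueRatio n 1 p := by
            rw [valueRatio_succ_succ hp]
            exact weightedMean_le_left (upOdds_nonneg hp n 1) (ih 1)
        _ ≤ valueRatio (n + 1) 0 p := by
            rw [valueRatio_succ_zero hp]
            have := upOdds_nonneg hp n 0
            have := maxLeRatio_nonneg hp n 1
            have := valueRatio_nonneg hp n 0
            exact le_add_of_nonneg_left (by positivity)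
    · calc valueRatio (n + 1) 3 p ≤ valueRatio n 2 p := by
            rw [valueRatio_succ_succ hp]
            exact weightedMean_le_left (upOdds_nonneg hp n 2) (ih 2)
        _ ≤ valueRatio (n + 1) 1 p := by
            rw [valueRatio_succ_one hp]
            exact le_max_of_le_right (right_le_weightedMean (upOdds_nonneg hp n 0) (ih 0))
    · calc valueRatio (n + 1) (j + 4) p ≤ valueRatio n (j + 3) p := by
            rw [valueRatio_succ_succ hp]
            exact weightedMean_le_left (upOdds_nonneg hp n _) (ih _)
        _ ≤ valueRatio (n + 1) (j + 2) p := by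
            rw [valueRatio_succ_succ hp]
            exact right_le_weightedMean (upOdds_nonneg hp n _) (ih _)

theorem valueRatio_monotoneOn (n j : ℕ) : MonotoneOn (valueRatio n j) (Set.Ico 0 1) := by
  induction n generalizing j with
  | zero => intro p _ q _ _; rcases j with _ | _ | j <;> simp [valueRatio, probMaxLe, piVal]
  | succ n ih =>
    rcases j with _ | _ | j
    · refine ((((upOdds_monotoneOn n 0).mul (maxLeRatio_monotoneOn n 1)
        (fun p hp => upOdds_nonneg hp n 0) (fun p hp => maxLeRatio_nonneg hp n 1)).mul (ih 0)
        (fun p hp => ?_) (fun p hp => valueRatio_nonneg hp n 0)).add (ih 1)).congr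
        fun p hp => (valueRatio_succ_zero hp n).symm
      exact mul_nonneg (upOdds_nonneg hp n 0) (maxLeRatio_nonneg hp n 1)
    · exact (monotoneOn_const.max ((upOdds_monotoneOn n 0).weightedMean
        (fun p hp => upOdds_nonneg hp n 0) (ih 0) (ih 2) fun p hp => valueRatio_le hp n 0)).congr
        fun p hp => (valueRatio_succ_one hp n).symm
    · exact ((upOdds_monotoneOn n _).weightedMean (fun p hp => upOdds_nonneg hp n _) (ih _)
        (ih _) fun p hp => valueRatio_le hp n _).congr
        fun p hp => (valueRatio_succ_succ hp n j).symm

theorem W_div_U_monotoneOn (n : ℕ) : MonotoneOn (fun p => W n p / U n p) (Set.Ico 0 1) := by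
  cases n with
  | zero =>
    -- `W 0` reads `π_p(0, ·)` since `0 - 1 = 0` in `ℕ`, so `W 0 p / U 0 p = p`.
    refine monotoneOn_id.congr fun p _ => ?_
    simp [W, U_eq_probMaxLe, probMaxLe, piVal]
  | succ n =>
    exact ((upOdds_monotoneOn n 0).weightedMean (fun p hp => upOdds_nonneg hp n 0)
      (valueRatio_monotoneOn n 0) (valueRatio_monotoneOn n 2)
      fun p hp => valueRatio_le hp n 0).congr fun p hp => (W_succ_div_U hp n).symm

lemma continuous_probMaxLe (n k : ℕ) : Continuous (probMaxLe n k) := by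
  induction n generalizing k with
  | zero => exact continuous_const
  | succ n ih =>
    cases k with
    | zero => have := ih 1; simp only [probMaxLe]; fun_prop
    | succ k => have := ih k; have := ih (k + 2); simp only [probMaxLe]; fun_prop

lemma continuous_U (n : ℕ) : Continuous (U n) := by
  simpa only [funext (U_eq_probMaxLe n)] using continuous_probMaxLe n 1

lemma continuous_piVal (n j : ℕ) : Continuous fun p => piVal p n j := by
  induction n generalizing j with
  | zero => rcases j with _ | _ | j <;> simp only [piVal] <;> fun_prop
  | succ n ih =>
    have := ih 0; have := ih 1; have := ih 2; have := ih (j + 1); have := ih (j + 3)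
    have := continuous_U (n + 1)
    rcases j with _ | _ | j <;> simp only [piVal] <;> fun_prop

lemma continuous_W (n : ℕ) : Continuous (W n) := by
  have := continuous_piVal (n - 1) 0
  have := continuous_piVal (n - 1) 2
  unfold W
  fun_prop

lemma W_le_U_of_le {n : ℕ} {x y : ℝ} (hx : x ∈ Set.Ico 0 1) (hy : y ∈ Set.Ico 0 1)
    (hxy : x ≤ y) (h : W n y ≤ U n y) : W n x ≤ U n x := by
  have hUx : 0 < U n x := (U_eq_probMaxLe n x).symm ▸ probMaxLe_pos hx n 1
  have hUy : 0 < U n y := (U_eq_probMaxLe n y).symm ▸ probMaxLe_pos hy n 1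
  rw [← div_le_one hUx]
  exact (W_div_U_monotoneOn n hx hy hxy).trans ((div_le_one hUy).2 h)

theorem stopping_set_is_left_interval_general (n : ℕ) (p : ℝ)
    (hp : p ∈ Set.Ioo (0 : ℝ) 1) :
    U n p ≥ W n p ↔ p ≤ pc n :=
  ge_iff_le_sSup_of_downward_closed (continuous_W n) (continuous_U n)
    (fun _ hx _ hy => W_le_U_of_le (Set.Ioo_subset_Ico_self hx) (Set.Ioo_subset_Ico_self hy)) hp

/-- For every `n ≥ 1`, stopping is optimal in state `(n,1)` exactly on a left interval
with right endpoint `p_n`: for `p ∈ (0,1)`, `U_n(p) ≥ W_n(p)` iff `p ≤ p_n`. -/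
theorem stopping_set_is_left_interval (n : ℕ) (hn : 1 ≤ n) (p : ℝ)
    (hp : p ∈ Set.Ioo (0 : ℝ) 1) :
    U n p ≥ W n p ↔ p ≤ pc n :=
  stopping_set_is_left_interval_general n p hp
end

section
/- For every real p with 0 < p < 1/2 and q = 1 − p, the total probability that the walk ever reaches level 1 is p/q: the infinite series Σ_{j=0}^{∞} (1/(j+1))·C(2j, j)·p^{j+1} q^{j} converges and its sum equals p/q. -/
/-!
Writing `C(x) = ∑ₙ catalan n * xⁿ`, the series is `p * C(p * q)`. Catalan's recurrence
makes `C` a root of `x * C² - C + 1 = 0`, so `2 * x * C(x) - 1 = ±√(1 - 4 * x)`. Both sides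
are continuous on `|x| < 1/4`, the right-hand side never vanishes and the minus sign is
right at `x = 0`, so it is right everywhere. At `x = p * q` we have `√(1 - 4 * x) = q - p`,
which gives `C(p * q) = 1 / q`.
-/

open Finset Set

theorem catalan_le_four_pow (n : ℕ) : catalan n ≤ 4 ^ n :=
  calc catalan n ≤ n.centralBinom := Nat.le_of_dvd n.centralBinom_pos
        ⟨n + 1, by rw [← succ_mul_catalan_eq_centralBinom, mul_comm]⟩
    _ ≤ 4 ^ n := Nat.centralBinom_le_four_pow n

theorem catalan_eq_choose_div {K : Type*} [Field K] [CharZero K] (n : ℕ) :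
    (catalan n : K) = (2 * n).choose n / (n + 1) := by
  rw [eq_div_iff (Nat.cast_add_one_ne_zero n), ← Nat.centralBinom_eq_two_mul_choose,
    ← succ_mul_catalan_eq_centralBinom]
  push_cast
  ring

theorem norm_catalan_mul_pow_le (n : ℕ) (x : ℝ) :
    ‖(catalan n : ℝ) * x ^ n‖ ≤ (4 * |x|) ^ n := by
  rw [norm_mul, norm_pow, Real.norm_natCast, Real.norm_eq_abs, mul_pow]
  gcongr
  exact_mod_cast catalan_le_four_pow n

theorem summable_norm_catalan_mul_pow {x : ℝ} (hx : |x| < 1 / 4) :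
    Summable fun n => ‖(catalan n : ℝ) * x ^ n‖ :=
  (summable_geometric_of_lt_one (by positivity) (by linarith)).of_nonneg_of_le
    (fun _ => norm_nonneg _) (fun n => norm_catalan_mul_pow_le n x)

noncomputable def catalanGF (x : ℝ) : ℝ := ∑' n, (catalan n : ℝ) * x ^ n

theorem hasSum_catalanGF {x : ℝ} (hx : |x| < 1 / 4) :
    HasSum (fun n => (catalan n : ℝ) * x ^ n) (catalanGF x) :=
  (summable_norm_catalan_mul_pow hx).of_norm.hasSum

theorem catalanGF_zero : catalanGF 0 = 1 := by
  rw [catalanGF, tsum_eq_single 0 fun n hn => by simp [hn]]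
  simp

theorem catalanGF_eq_one_add_mul_sq {x : ℝ} (hx : |x| < 1 / 4) :
    catalanGF x = 1 + x * catalanGF x ^ 2 := by
  have hnorm := summable_norm_catalan_mul_pow hx
  have hcauchy : catalanGF x ^ 2 = ∑' n, (catalan (n + 1) : ℝ) * x ^ n := by
    rw [sq, catalanGF, tsum_mul_tsum_eq_tsum_sum_antidiagonal_of_summable_norm hnorm hnorm]
    refine tsum_congr fun n => ?_
    rw [catalan_succ', Nat.cast_sum, sum_mul]
    refine sum_congr rfl fun kl hkl => ?_
    rw [← mem_antidiagonal.mp hkl, pow_add]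
    push_cast
    ring
  have hshift := (hasSum_nat_add_iff' 1).mpr (hasSum_catalanGF hx)
  simp only [range_one, sum_singleton, catalan_zero, pow_zero, Nat.cast_one, mul_one,
    pow_succ, ← mul_assoc] at hshift
  rw [hcauchy, mul_comm x, ← tsum_mul_right, hshift.tsum_eq]
  ring

theorem continuousOn_catalanGF {r : ℝ} (hr₀ : 0 ≤ r) (hr : r < 1 / 4) :
    ContinuousOn catalanGF (Icc (-r) r) := by
  refine continuousOn_tsum (fun n => (continuous_const.mul (continuous_pow n)).continuousOn)
    (summable_geometric_of_lt_one (r := 4 * r) (by positivity) (by linarith)) fun n y hy => ?_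
  have : |y| ≤ r := abs_le.mpr hy
  exact (norm_catalan_mul_pow_le n y).trans (by gcongr)

theorem two_mul_mul_catalanGF {x : ℝ} (hx : |x| < 1 / 4) :
    2 * x * catalanGF x = 1 - √(1 - 4 * x) := by
  set r := |x|
  have habs : ∀ y ∈ Icc (-r) r, |y| < 1 / 4 := fun y hy => (abs_le.mpr hy).trans_lt hx
  have hdisc : ∀ y ∈ Icc (-r) r, 0 < 1 - 4 * y := fun y hy => by
    linarith [le_abs_self y, habs y hy]
  have key : EqOn (fun y => 2 * y * catalanGF y - 1) (fun y => -√(1 - 4 * y)) (Icc (-r) r) := by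
    refine isPreconnected_Icc.eq_of_sq_eq (y := 0) ?_ ?_ (fun y hy => ?_) (fun hy => ?_)
      ⟨by simp [r], abs_nonneg x⟩ (by simp [catalanGF_zero])
    · exact ((continuousOn_const.mul continuousOn_id).mul
        (continuousOn_catalanGF (abs_nonneg x) hx)).sub continuousOn_const
    · exact (continuous_const.sub (continuous_const.mul continuous_id)).sqrt.neg.continuousOn
    · have hquad := catalanGF_eq_one_add_mul_sq (habs y hy)
      simp only [Pi.pow_apply, neg_sq, Real.sq_sqrt (hdisc y hy).le]
      linear_combination (-4 * y) * hquad
    · exact neg_ne_zero.mpr (Real.sqrt_ne_zero'.mpr (hdisc _ hy))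
  linarith [key ⟨neg_abs_le x, le_abs_self x⟩]

/-- For `0 < p < 1/2` and `q = 1 − p`, the series `Σ_j Catalan(j)·p^{j+1}·q^j`
converges with sum `p/q`: the total probability of ever reaching level 1. -/
theorem catalan_series_sum (p : ℝ) (hp0 : 0 < p) (hp : p < 1 / 2) :
    HasSum (fun j : ℕ => (((2 * j).choose j : ℝ) / (j + 1)) * p ^ (j + 1) * (1 - p) ^ j)
      (p / (1 - p)) := by
  set q := 1 - p
  have hq : 0 < q := by linarith
  have hx : |p * q| < 1 / 4 := by
    rw [abs_of_pos (by positivity)]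
    nlinarith [sq_nonneg (1 - 2 * p)]
  have hsqrt : √(1 - 4 * (p * q)) = q - p := by
    rw [show 1 - 4 * (p * q) = (q - p) ^ 2 by ring, Real.sqrt_sq (by linarith)]
  have hC : catalanGF (p * q) = 1 / q := by
    have h := two_mul_mul_catalanGF hx
    rw [hsqrt] at h
    field_simp
    nlinarith
  have h := (hasSum_catalanGF hx).mul_left p
  rw [hC, mul_one_div] at h
  refine h.congr_fun fun j => ?_
  rw [← catalan_eq_choose_div, mul_pow]
  ring
end

section
/- Let 0 < p ≤ 1/2, q = 1 − p, and for each integer i ≥ 0 set a_i := 1 − (p/q)(1 − p^i). For each integer i ≥ 1 let F_i be the probability that the Bernoulli walk first reaches level 1 at time i, i.e. F_i = 0 if i is even and F_{2j+1} = (1/(j+1))·C(2j, j)·p^{j+1} q^{j}. Then for every integer n ≥ 27: Σ_{i=1}^{n−1} a_{n−i}·F_i ≤ a_7·(p/q) + (p/50)·(a_5 + a_3 + a_1). -/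
/-!
Split the sum at `i = n - 6`. For `i < n - 6` the weight `a_{n-i}` is at most `a_7`, because `a`
decreases, and the total first-passage mass is at most `p / q`: the recursion
`C_{j+1} = Σ_{i ≤ j} C_i C_{j-i}` gives `S_{m+1} ≤ 1 + t S_m²` for the partial sums
`S_m = Σ_{j<m} C_j t^j`, so `S_m ≤ x` for every `x ≥ 1 + t x²`; take `t = pq` and `x = 1 / q`.
The last six indices are at least 21 and form three consecutive pairs, each containing a single
odd index `2j + 1`, where `F_{2j+1} = p C_j (pq)^j ≤ p C_j / 4^j ≤ p C_10 / 4^10 < p / 50`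
since `C_{j+1} ≤ 4 C_j`.
-/

/-- `a_i = 1 − (p/q)(1 − p^i)` with `q = 1 − p`. -/
noncomputable def aCoef (p : ℝ) (i : ℕ) : ℝ :=
  1 - (p / (1 - p)) * (1 - p ^ i)

/-- `F_i`: probability that the Bernoulli walk first reaches level 1 at time `i`;
zero for even `i`, and `F_{2j+1} = C(2j,j)/(j+1)·p^{j+1}·q^j`. -/
noncomputable def firstPassage (p : ℝ) (i : ℕ) : ℝ :=
  if i % 2 = 1 then
    (((i - 1).choose ((i - 1) / 2) : ℝ) / ((i - 1) / 2 + 1)) *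
      p ^ ((i - 1) / 2 + 1) * (1 - p) ^ ((i - 1) / 2)
  else 0

open Finset

theorem sum_range_cauchyProduct_le_mul {R : Type*} [CommSemiring R] [PartialOrder R]
    [IsOrderedRing R] {f g : ℕ → R} (hf : ∀ i, 0 ≤ f i) (hg : ∀ i, 0 ≤ g i) (n : ℕ) :
    ∑ m ∈ range n, ∑ k ∈ range (m + 1), f k * g (m - k) ≤
      (∑ k ∈ range n, f k) * ∑ k ∈ range n, g k := by
  rw [sum_range_diag_flip n fun i j => f i * g j, sum_mul_sum]
  refine sum_le_sum fun i _ => sum_le_sum_of_subset_of_nonneg (range_mono (by omega)) ?_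
  exact fun j _ _ => mul_nonneg (hf i) (hg j)

theorem sum_range_succ_catalan_mul_pow_le {t : ℝ} (ht : 0 ≤ t) (m : ℕ) :
    ∑ j ∈ range (m + 1), (catalan j : ℝ) * t ^ j ≤
      1 + t * (∑ j ∈ range m, (catalan j : ℝ) * t ^ j) ^ 2 := by
  have hsucc : ∑ k ∈ range m, (catalan (k + 1) : ℝ) * t ^ (k + 1) =
      t * ∑ k ∈ range m, ∑ i ∈ range (k + 1),
        (catalan i : ℝ) * t ^ i * ((catalan (k - i) : ℝ) * t ^ (k - i)) := by
    rw [mul_sum]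
    refine sum_congr rfl fun k _ => ?_
    rw [catalan_succ', Nat.sum_antidiagonal_eq_sum_range_succ_mk, Nat.cast_sum, sum_mul,
      mul_sum]
    refine sum_congr rfl fun i hi => ?_
    have hpow : t ^ (k + 1) = t * (t ^ i * t ^ (k - i)) := by
      rw [← pow_add, Nat.add_sub_cancel' (by simpa [Nat.lt_succ_iff] using hi), pow_succ']
    rw [hpow]
    push_cast
    ring
  have hprod := sum_range_cauchyProduct_le_mul (f := fun j => (catalan j : ℝ) * t ^ j)
    (g := fun j => (catalan j : ℝ) * t ^ j) (fun j => by positivity) (fun j => by positivity) m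
  rw [sum_range_succ', hsucc, sq]
  simp only [catalan_zero, Nat.cast_one, pow_zero, mul_one]
  linarith [mul_le_mul_of_nonneg_left hprod ht]

theorem sum_range_catalan_mul_pow_le {t x : ℝ} (ht : 0 ≤ t) (hx : 1 + t * x ^ 2 ≤ x) (m : ℕ) :
    ∑ j ∈ range m, (catalan j : ℝ) * t ^ j ≤ x := by
  induction m with
  | zero => simpa using (by nlinarith [mul_nonneg ht (sq_nonneg x)] : (0 : ℝ) ≤ x)
  | succ m ih =>
    have hS : 0 ≤ ∑ j ∈ range m, (catalan j : ℝ) * t ^ j := by positivity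
    calc ∑ j ∈ range (m + 1), (catalan j : ℝ) * t ^ j
        ≤ 1 + t * (∑ j ∈ range m, (catalan j : ℝ) * t ^ j) ^ 2 :=
          sum_range_succ_catalan_mul_pow_le ht m
      _ ≤ 1 + t * x ^ 2 := by gcongr
      _ ≤ x := hx

theorem succ_succ_mul_catalan_succ (n : ℕ) :
    (n + 2) * catalan (n + 1) = 2 * (2 * n + 1) * catalan n := by
  refine Nat.eq_of_mul_eq_mul_left n.succ_pos ?_
  calc (n + 1) * ((n + 2) * catalan (n + 1)) = (n + 1) * (n + 1).centralBinom := by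
        rw [← succ_mul_catalan_eq_centralBinom]
    _ = 2 * (2 * n + 1) * n.centralBinom := Nat.succ_mul_centralBinom_succ n
    _ = (n + 1) * (2 * (2 * n + 1) * catalan n) := by
        rw [← succ_mul_catalan_eq_centralBinom]
        ring

theorem catalan_succ_le_four_mul (n : ℕ) : catalan (n + 1) ≤ 4 * catalan n := by
  refine Nat.le_of_mul_le_mul_left (c := n + 2) ?_ (by omega)
  rw [succ_succ_mul_catalan_succ, ← mul_assoc]
  exact Nat.mul_le_mul_right _ (by omega)

theorem catalan_mul_four_pow_le {m n : ℕ} (h : m ≤ n) :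
    catalan n * 4 ^ m ≤ catalan m * 4 ^ n := by
  induction n, h using Nat.le_induction with
  | base => rfl
  | succ n _ ih =>
    calc catalan (n + 1) * 4 ^ m ≤ 4 * (catalan n * 4 ^ m) := by
          rw [← mul_assoc]; gcongr; exact catalan_succ_le_four_mul n
      _ ≤ catalan m * 4 ^ (n + 1) := by rw [pow_succ]; nlinarith

theorem catalan_ten : catalan 10 = 16796 := by
  simp [catalan_succ', Nat.sum_antidiagonal_eq_sum_range_succ_mk, sum_range_succ]

theorem catalan_mul_pow_le_of_ten_le {t : ℝ} (ht0 : 0 ≤ t) (ht : t ≤ 1 / 4) {j : ℕ}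
    (hj : 10 ≤ j) : (catalan j : ℝ) * t ^ j ≤ 1 / 50 := by
  have hdecay : (catalan j : ℝ) * 4 ^ 10 ≤ 16796 * 4 ^ j := by
    exact_mod_cast catalan_ten ▸ catalan_mul_four_pow_le hj
  calc (catalan j : ℝ) * t ^ j ≤ catalan j * (1 / 4) ^ j := by gcongr
    _ = catalan j * 4 ^ 10 / (4 ^ 10 * 4 ^ j) := by rw [one_div, inv_pow]; field_simp
    _ ≤ 16796 * 4 ^ j / (4 ^ 10 * 4 ^ j) := by gcongr
    _ ≤ 1 / 50 := by field_simp; norm_num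

theorem firstPassage_of_even {p : ℝ} {i : ℕ} (hi : Even i) : firstPassage p i = 0 :=
  if_neg (by rw [Nat.even_iff] at hi; omega)

theorem firstPassage_two_mul_add_one (p : ℝ) (j : ℕ) :
    firstPassage p (2 * j + 1) = p * ((catalan j : ℝ) * (p * (1 - p)) ^ j) := by
  have hchoose : ((2 * j).choose j : ℝ) = (j + 1) * catalan j := by
    exact_mod_cast (Nat.centralBinom_eq_two_mul_choose j ▸ succ_mul_catalan_eq_centralBinom j).symm
  rw [firstPassage, if_pos (by omega), Nat.add_sub_cancel, Nat.mul_div_cancel_left j two_pos,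
    hchoose]
  have hden : ((2 * j + 1 : ℕ) - 1 : ℝ) / 2 + 1 = j + 1 := by push_cast; ring
  rw [hden, mul_div_cancel_left₀ _ (by positivity), mul_pow]
  ring

theorem firstPassage_nonneg {p : ℝ} (hp0 : 0 ≤ p) (hp1 : p ≤ 1) (i : ℕ) :
    0 ≤ firstPassage p i := by
  obtain ⟨j, rfl | rfl⟩ := Nat.even_or_odd' i
  · rw [firstPassage_of_even (even_two_mul j)]
  · have : 0 ≤ 1 - p := by linarith
    rw [firstPassage_two_mul_add_one]
    positivity

theorem sum_range_two_mul_firstPassage (p : ℝ) (M : ℕ) :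
    ∑ i ∈ range (2 * M), firstPassage p i =
      p * ∑ j ∈ range M, (catalan j : ℝ) * (p * (1 - p)) ^ j := by
  induction M with
  | zero => simp
  | succ M ih =>
    rw [Nat.mul_succ, sum_range_succ, sum_range_succ, ih, firstPassage_of_even (even_two_mul M),
      firstPassage_two_mul_add_one, sum_range_succ]
    ring

theorem sum_firstPassage_le {p : ℝ} (hp0 : 0 ≤ p) (hp1 : p < 1) (s : Finset ℕ) :
    ∑ i ∈ s, firstPassage p i ≤ p / (1 - p) := by
  have hq : 0 < 1 - p := by linarith
  have hfix : 1 + p * (1 - p) * (1 / (1 - p)) ^ 2 ≤ 1 / (1 - p) := by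
    refine le_of_eq ?_
    field_simp
    ring
  set N := s.sup id + 1
  calc ∑ i ∈ s, firstPassage p i ≤ ∑ i ∈ range (2 * N), firstPassage p i := by
        refine sum_le_sum_of_subset_of_nonneg (fun i hi => ?_)
          fun i _ _ => firstPassage_nonneg hp0 hp1.le i
        have : i ≤ s.sup id := le_sup (f := id) hi
        exact mem_range.mpr (by omega)
    _ = p * ∑ j ∈ range N, (catalan j : ℝ) * (p * (1 - p)) ^ j :=
        sum_range_two_mul_firstPassage p N
    _ ≤ p * (1 / (1 - p)) := by
        gcongr
        exact sum_range_catalan_mul_pow_le (by positivity) hfix N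
    _ = p / (1 - p) := by ring

theorem firstPassage_le_of_odd {p : ℝ} (hp0 : 0 ≤ p) (hp1 : p ≤ 1) {i : ℕ} (hi : Odd i)
    (h21 : 21 ≤ i) : firstPassage p i ≤ p / 50 := by
  obtain ⟨j, rfl⟩ := hi
  have hpq : 0 ≤ p * (1 - p) := mul_nonneg hp0 (by linarith)
  rw [firstPassage_two_mul_add_one, div_eq_mul_one_div]
  gcongr
  exact catalan_mul_pow_le_of_ten_le hpq (by nlinarith [sq_nonneg (p - 1 / 2)]) (by omega)

theorem firstPassage_add_firstPassage_succ_le {p : ℝ} (hp0 : 0 ≤ p) (hp1 : p ≤ 1) {i : ℕ}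
    (h21 : 21 ≤ i) : firstPassage p i + firstPassage p (i + 1) ≤ p / 50 := by
  rcases Nat.even_or_odd i with hi | hi
  · rw [firstPassage_of_even hi, zero_add]
    exact firstPassage_le_of_odd hp0 hp1 hi.add_one (by omega)
  · rw [firstPassage_of_even hi.add_one, add_zero]
    exact firstPassage_le_of_odd hp0 hp1 hi h21

theorem aCoef_antitone {p : ℝ} (hp0 : 0 ≤ p) (hp1 : p ≤ 1) : Antitone (aCoef p) := by
  intro i j hij
  have hpow : p ^ j ≤ p ^ i := pow_le_pow_of_le_one hp0 hp1 hij
  have hr : 0 ≤ p / (1 - p) := div_nonneg hp0 (by linarith)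
  unfold aCoef
  nlinarith

theorem aCoef_nonneg {p : ℝ} (hp0 : 0 ≤ p) (hp : p ≤ 1 / 2) (i : ℕ) : 0 ≤ aCoef p i := by
  have hr : p / (1 - p) ≤ 1 := by rw [div_le_one (by linarith)]; linarith
  have hr0 : 0 ≤ p / (1 - p) := div_nonneg hp0 (by linarith)
  have hpow : 0 ≤ p ^ i := pow_nonneg hp0 i
  unfold aCoef
  nlinarith

theorem sum_aCoef_mul_firstPassage_le {p : ℝ} (hp0 : 0 ≤ p) (hp : p ≤ 1 / 2) (s : Finset ℕ)
    {f : ℕ → ℕ} {m : ℕ} (hf : ∀ i ∈ s, m ≤ f i) :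
    ∑ i ∈ s, aCoef p (f i) * firstPassage p i ≤ aCoef p m * (p / (1 - p)) := by
  have hp1 : p ≤ 1 := by linarith
  calc ∑ i ∈ s, aCoef p (f i) * firstPassage p i ≤ ∑ i ∈ s, aCoef p m * firstPassage p i := by
        refine sum_le_sum fun i hi => ?_
        gcongr
        · exact firstPassage_nonneg hp0 hp1 i
        · exact aCoef_antitone hp0 hp1 (hf i hi)
    _ = aCoef p m * ∑ i ∈ s, firstPassage p i := by rw [mul_sum]
    _ ≤ aCoef p m * (p / (1 - p)) := by
        gcongr
        · exact aCoef_nonneg hp0 hp m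
        · exact sum_firstPassage_le hp0 (by linarith) s

theorem aCoef_succ_mul_add_aCoef_mul_le {p : ℝ} (hp0 : 0 ≤ p) (hp : p ≤ 1 / 2) (m : ℕ) {i : ℕ}
    (h21 : 21 ≤ i) :
    aCoef p (m + 1) * firstPassage p i + aCoef p m * firstPassage p (i + 1) ≤
      aCoef p m * (p / 50) := by
  have hp1 : p ≤ 1 := by linarith
  calc aCoef p (m + 1) * firstPassage p i + aCoef p m * firstPassage p (i + 1)
      ≤ aCoef p m * firstPassage p i + aCoef p m * firstPassage p (i + 1) := by
        gcongr
        · exact firstPassage_nonneg hp0 hp1 i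
        · exact aCoef_antitone hp0 hp1 m.le_succ
    _ = aCoef p m * (firstPassage p i + firstPassage p (i + 1)) := by ring
    _ ≤ aCoef p m * (p / 50) := by
        gcongr
        · exact aCoef_nonneg hp0 hp m
        · exact firstPassage_add_firstPassage_succ_le hp0 hp1 h21

/-- For `0 < p ≤ 1/2` and `n ≥ 27`:
`Σ_{i=1}^{n−1} a_{n−i}·F_i ≤ a_7·(p/q) + (p/50)·(a_5 + a_3 + a_1)`. -/
theorem weighted_first_passage_bound (p : ℝ) (hp0 : 0 < p) (hp : p ≤ 1 / 2)
    (n : ℕ) (hn : 27 ≤ n) :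
    ∑ i ∈ Finset.Icc 1 (n - 1), aCoef p (n - i) * firstPassage p i ≤
      aCoef p 7 * (p / (1 - p)) + p / 50 * (aCoef p 5 + aCoef p 3 + aCoef p 1) := by
  obtain ⟨k, rfl⟩ : ∃ k, n = k + 6 := ⟨n - 6, by omega⟩
  have hIcc : Icc 1 (k + 6 - 1) = Ico 1 (k + 6) := by ext; simp only [mem_Icc, mem_Ico]; omega
  rw [hIcc, ← sum_Ico_consecutive _ (by omega : 1 ≤ k) (by omega : k ≤ k + 6)]
  have head : ∑ i ∈ Ico 1 k, aCoef p (k + 6 - i) * firstPassage p i ≤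
      aCoef p 7 * (p / (1 - p)) :=
    sum_aCoef_mul_firstPassage_le hp0.le hp _ fun i hi => by simp only [mem_Ico] at hi; omega
  have tail : ∑ i ∈ Ico k (k + 6), aCoef p (k + 6 - i) * firstPassage p i =
      aCoef p 6 * firstPassage p k + aCoef p 5 * firstPassage p (k + 1) +
      aCoef p 4 * firstPassage p (k + 2) + aCoef p 3 * firstPassage p (k + 3) +
      aCoef p 2 * firstPassage p (k + 4) + aCoef p 1 * firstPassage p (k + 5) := by
    simp [sum_Ico_eq_sum_range, sum_range_succ]
  rw [tail]
  linarith [aCoef_succ_mul_add_aCoef_mul_le hp0.le hp 5 (i := k) (by omega),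
    aCoef_succ_mul_add_aCoef_mul_le hp0.le hp 3 (i := k + 2) (by omega),
    aCoef_succ_mul_add_aCoef_mul_le hp0.le hp 1 (i := k + 4) (by omega)]
end

section
/- For every real p with 0.478 ≤ p ≤ 0.5 and every integer m ≥ 1, the quantity m^6·b_6(p) + m^5·b_5(p) + m^4·b_4(p) + m^3·b_3(p) + m^2·b_2(p) + m·b_1(p) is nonnegative, where b_6(p) = −48p^6 + 240p^5 − 340p^4 + 112p^3 + 62p^2 − 21p − 4, b_5(p) = −192p^6 + 864p^5 − 1014p^4 + 468p^2 − 87p − 30, b_4(p) = −228p^6 + 852p^5 − 652p^4 − 572p^3 + 722p^2 − 15p − 76, b_3(p) = −48p^6 + 72p^5 + 78p^4 − 72p^3 − 108p^2 + 195p − 66, b_2(p) = 60p^6 − 228p^5 + 128p^4 + 316p^3 − 280p^2 + 36p + 8, and b_1(p) = 24p^6 − 72p^5 + 72p^4 − 72p^3 + 144p^2 − 108p + 24. -/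
private lemma pm_b6 (p : ℝ) (hp1 : 0.478 ≤ p) (hp2 : p ≤ 0.5) :
    0 ≤ -48 * p ^ 6 + 240 * p ^ 5 - 340 * p ^ 4 + 112 * p ^ 3 + 62 * p ^ 2 - 21 * p - 4 := by
  nlinarith [mul_nonneg (sub_nonneg.2 hp1) (sub_nonneg.2 hp2),
    mul_nonneg (mul_nonneg (sub_nonneg.2 hp1) (sub_nonneg.2 hp2))
      (mul_nonneg (sub_nonneg.2 hp1) (sub_nonneg.2 hp2)),
    mul_nonneg (mul_nonneg (sub_nonneg.2 hp1) (sub_nonneg.2 hp2)) (sq_nonneg p)]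

private lemma pm_b5 (p : ℝ) (hp1 : 0.478 ≤ p) (hp2 : p ≤ 0.5) :
    0 ≤ -192 * p ^ 6 + 864 * p ^ 5 - 1014 * p ^ 4 + 468 * p ^ 2 - 87 * p - 30 := by
  nlinarith [mul_nonneg (sub_nonneg.2 hp1) (sub_nonneg.2 hp2),
    mul_nonneg (mul_nonneg (sub_nonneg.2 hp1) (sub_nonneg.2 hp2))
      (mul_nonneg (sub_nonneg.2 hp1) (sub_nonneg.2 hp2)),
    mul_nonneg (mul_nonneg (sub_nonneg.2 hp1) (sub_nonneg.2 hp2)) (sq_nonneg p)]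

private lemma pm_b3 (p : ℝ) (hp1 : 0.478 ≤ p) (hp2 : p ≤ 0.5) :
    0 ≤ (-48 * p ^ 6 + 72 * p ^ 5 + 78 * p ^ 4 - 72 * p ^ 3 - 108 * p ^ 2 + 195 * p - 66)
      + 1/25 := by
  nlinarith [mul_nonneg (sub_nonneg.2 hp1) (sub_nonneg.2 hp2),
    mul_nonneg (mul_nonneg (sub_nonneg.2 hp1) (sub_nonneg.2 hp2))
      (mul_nonneg (sub_nonneg.2 hp1) (sub_nonneg.2 hp2)),
    mul_nonneg (mul_nonneg (sub_nonneg.2 hp1) (sub_nonneg.2 hp2)) (sq_nonneg p)]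

private lemma pm_b2 (p : ℝ) (hp1 : 0.478 ≤ p) (hp2 : p ≤ 0.5) :
    (60 * p ^ 6 - 228 * p ^ 5 + 128 * p ^ 4 + 316 * p ^ 3 - 280 * p ^ 2 + 36 * p + 8) ≤ 0 := by
  nlinarith [mul_nonneg (sub_nonneg.2 hp1) (sub_nonneg.2 hp2),
    mul_nonneg (mul_nonneg (sub_nonneg.2 hp1) (sub_nonneg.2 hp2))
      (mul_nonneg (sub_nonneg.2 hp1) (sub_nonneg.2 hp2)),
    mul_nonneg (mul_nonneg (sub_nonneg.2 hp1) (sub_nonneg.2 hp2)) (sq_nonneg p)]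

private lemma pm_b1 (p : ℝ) (hp1 : 0.478 ≤ p) (hp2 : p ≤ 0.5) :
    (24 * p ^ 6 - 72 * p ^ 5 + 72 * p ^ 4 - 72 * p ^ 3 + 144 * p ^ 2 - 108 * p + 24) ≤ 0 := by
  nlinarith [mul_nonneg (sub_nonneg.2 hp1) (sub_nonneg.2 hp2),
    mul_nonneg (mul_nonneg (sub_nonneg.2 hp1) (sub_nonneg.2 hp2))
      (mul_nonneg (sub_nonneg.2 hp1) (sub_nonneg.2 hp2)),
    mul_nonneg (mul_nonneg (sub_nonneg.2 hp1) (sub_nonneg.2 hp2)) (sq_nonneg p)]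

private lemma pm_comb (p : ℝ) (hp1 : 0.478 ≤ p) (hp2 : p ≤ 0.5) :
    0 ≤ (-228 * p ^ 6 + 852 * p ^ 5 - 652 * p ^ 4 - 572 * p ^ 3 + 722 * p ^ 2 - 15 * p - 76)
      + (60 * p ^ 6 - 228 * p ^ 5 + 128 * p ^ 4 + 316 * p ^ 3 - 280 * p ^ 2 + 36 * p + 8)
      + (24 * p ^ 6 - 72 * p ^ 5 + 72 * p ^ 4 - 72 * p ^ 3 + 144 * p ^ 2 - 108 * p + 24)
      - 1/25 := by
  nlinarith [mul_nonneg (sub_nonneg.2 hp1) (sub_nonneg.2 hp2),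
    mul_nonneg (mul_nonneg (sub_nonneg.2 hp1) (sub_nonneg.2 hp2))
      (mul_nonneg (sub_nonneg.2 hp1) (sub_nonneg.2 hp2)),
    mul_nonneg (mul_nonneg (sub_nonneg.2 hp1) (sub_nonneg.2 hp2)) (sq_nonneg p)]

private lemma pm_assemble (x B6 B5 B4 B3 B2 B1 : ℝ) (hx : 1 ≤ x)
    (h6 : 0 ≤ B6) (h5 : 0 ≤ B5) (h3 : 0 ≤ B3 + 1/25) (h2 : B2 ≤ 0) (h1 : B1 ≤ 0)
    (hc : 0 ≤ B4 + B2 + B1 - 1/25) :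
    0 ≤ x ^ 6 * B6 + x ^ 5 * B5 + x ^ 4 * B4 + x ^ 3 * B3 + x ^ 2 * B2 + x * B1 := by
  have hx0 : (0 : ℝ) ≤ x := by linarith
  have key : 0 ≤ x ^ 3 * B4 + x ^ 2 * B3 + x * B2 + B1 := by
    have t1 : 0 ≤ x ^ 3 * (B4 + B2 + B1 - 1/25) := mul_nonneg (pow_nonneg hx0 3) hc
    have t2 : 0 ≤ x ^ 2 * (B3 + 1/25) := mul_nonneg (sq_nonneg x) h3
    have t4 : 0 ≤ x * (x ^ 2 - 1) * (-B2) :=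
      mul_nonneg (mul_nonneg hx0 (by nlinarith)) (by linarith)
    have t5 : 0 ≤ (x ^ 3 - 1) * (-B1) := mul_nonneg (by nlinarith) (by linarith)
    have t3 : 0 ≤ x ^ 3 - x ^ 2 := by nlinarith
    nlinarith [t1, t2, t3, t4, t5]
  have h6' : 0 ≤ x ^ 6 * B6 := mul_nonneg (pow_nonneg hx0 6) h6
  have h5' : 0 ≤ x ^ 5 * B5 := mul_nonneg (pow_nonneg hx0 5) h5
  have hk' : 0 ≤ x * (x ^ 3 * B4 + x ^ 2 * B3 + x * B2 + B1) := mul_nonneg hx0 key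
  nlinarith [h6', h5', hk']

/-- For `0.478 ≤ p ≤ 0.5` and every integer `m ≥ 1`, the polynomial
`m^6·b_6(p) + m^5·b_5(p) + m^4·b_4(p) + m^3·b_3(p) + m^2·b_2(p) + m·b_1(p)` is nonnegative. -/
theorem poly_in_m_nonneg (p : ℝ) (hp1 : 0.478 ≤ p) (hp2 : p ≤ 0.5) (m : ℕ) (hm : 1 ≤ m) :
    0 ≤ (m : ℝ) ^ 6 * (-48 * p ^ 6 + 240 * p ^ 5 - 340 * p ^ 4 + 112 * p ^ 3 + 62 * p ^ 2 -
            21 * p - 4) +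
        (m : ℝ) ^ 5 * (-192 * p ^ 6 + 864 * p ^ 5 - 1014 * p ^ 4 + 468 * p ^ 2 - 87 * p - 30) +
        (m : ℝ) ^ 4 * (-228 * p ^ 6 + 852 * p ^ 5 - 652 * p ^ 4 - 572 * p ^ 3 + 722 * p ^ 2 -
            15 * p - 76) +
        (m : ℝ) ^ 3 * (-48 * p ^ 6 + 72 * p ^ 5 + 78 * p ^ 4 - 72 * p ^ 3 - 108 * p ^ 2 +
            195 * p - 66) +
        (m : ℝ) ^ 2 * (60 * p ^ 6 - 228 * p ^ 5 + 128 * p ^ 4 + 316 * p ^ 3 - 280 * p ^ 2 +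
            36 * p + 8) +
        (m : ℝ) * (24 * p ^ 6 - 72 * p ^ 5 + 72 * p ^ 4 - 72 * p ^ 3 + 144 * p ^ 2 -
            108 * p + 24) := by
  have hx : (1 : ℝ) ≤ (m : ℝ) := by exact_mod_cast hm
  exact pm_assemble _ _ _ _ _ _ _ hx (pm_b6 p hp1 hp2) (pm_b5 p hp1 hp2) (pm_b3 p hp1 hp2)
    (pm_b2 p hp1 hp2) (pm_b1 p hp1 hp2) (pm_comb p hp1 hp2)
end
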